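/- (CSO objective vanishes on separable data.) Suppose (β, τ) ∈ ℝ^p × ℝ^{K−1} ε-separates the data for some ε > 0, i.e., for every instance i: ⟨β, x_i⟩ ≥ τ_j + ε for all j < k_i and ⟨β, x_i⟩ ≤ τ_j − ε for all j ≥ k_i. Then the CSO objective satisfies 0 ≤ F_α(β, τ) ≤ (exp(−α·ε)/α)·Σ_{i=1}^n w_i·(Σ_{j=1}^{k_i−1} λ_j + Σ_{j=k_i}^{K−1} μ_j), and hence F_α(β, τ) → 0 as α → ∞. -/
import Mathlib


open RealInnerProductSpace Filter

/-- Softplus with temperature `α`. -/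
noncomputable def softplus (α t : ℝ) : ℝ := (1 / α) * Real.log (1 + Real.exp (α * t))

lemma softplus_nonneg {α : ℝ} (hα : 0 < α) (t : ℝ) : 0 ≤ softplus α t := by
  unfold softplus
  apply mul_nonneg (by positivity)
  apply Real.log_nonneg
  nlinarith [Real.exp_pos (α * t)]

lemma softplus_le {α t : ℝ} (hα : 0 < α) {ε : ℝ} (ht : t ≤ -ε) :
    softplus α t ≤ Real.exp (-(α * ε)) / α := by
  unfold softplus
  rw [one_div_mul_eq_div]
  gcongr
  calc Real.log (1 + Real.exp (α * t)) ≤ (1 + Real.exp (α * t)) - 1 :=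
        Real.log_le_sub_one_of_pos (by positivity)
    _ = Real.exp (α * t) := by ring
    _ ≤ Real.exp (-(α * ε)) := by
        apply Real.exp_le_exp.2; nlinarith
/-- Per-instance CSO loss; threshold index `j ∈ {1,…,K−1}` is represented by
`j : Fin (K-1)` with value `(j : ℕ) + 1`. -/
noncomputable def csoLoss {p K : ℕ} (α : ℝ) (x : EuclideanSpace ℝ (Fin p)) (k : ℕ)
    (lam mu : Fin (K - 1) → ℝ) (β : EuclideanSpace ℝ (Fin p)) (τ : Fin (K - 1) → ℝ) : ℝ :=
  ∑ j : Fin (K - 1),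
    if (j : ℕ) + 1 < k then lam j * softplus α (τ j - ⟪β, x⟫)
    else mu j * softplus α (⟪β, x⟫ - τ j)

/-- if `(β, τ)` ε-separates the data (for every instance `i`,
`⟨β,x_i⟩ ≥ τ_j + ε` for all thresholds `j < k_i` and `⟨β,x_i⟩ ≤ τ_j − ε` for all
`j ≥ k_i`), then for every `α > 0`,
`0 ≤ F_α(β,τ) ≤ (exp(−α·ε)/α)·Σ_i w_i·(Σ_{j<k_i} λ_j + Σ_{j≥k_i} μ_j)`,
and `F_α(β,τ) → 0` as `α → ∞`. -/
theorem cso_objective_vanishes_on_separable_data (p K n : ℕ) (hp : 1 ≤ p) (hK : 2 ≤ K)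
    (x : Fin n → EuclideanSpace ℝ (Fin p)) (k : Fin n → ℕ)
    (hk1 : ∀ i, 1 ≤ k i) (hkK : ∀ i, k i ≤ K)
    (w : Fin n → ℝ) (hw : ∀ i, 0 ≤ w i)
    (lam mu : Fin (K - 1) → ℝ) (hlam : ∀ j, 0 ≤ lam j) (hmu : ∀ j, 0 ≤ mu j)
    (β : EuclideanSpace ℝ (Fin p)) (τ : Fin (K - 1) → ℝ) (ε : ℝ) (hε : 0 < ε)
    (hsep : ∀ i : Fin n, ∀ j : Fin (K - 1),
      ((j : ℕ) + 1 < k i → ⟪β, x i⟫ ≥ τ j + ε) ∧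
      ((j : ℕ) + 1 ≥ k i → ⟪β, x i⟫ ≤ τ j - ε)) :
    (∀ α : ℝ, 0 < α →
      0 ≤ (∑ i : Fin n, w i * csoLoss α (x i) (k i) lam mu β τ) ∧
      (∑ i : Fin n, w i * csoLoss α (x i) (k i) lam mu β τ) ≤
        (Real.exp (-(α * ε)) / α) *
          ∑ i : Fin n, w i *
            ((∑ j : Fin (K - 1), if (j : ℕ) + 1 < k i then lam j else 0) +
             (∑ j : Fin (K - 1), if (j : ℕ) + 1 < k i then 0 else mu j))) ∧
    Tendsto (fun α : ℝ => ∑ i : Fin n, w i * csoLoss α (x i) (k i) lam mu β τ)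
      atTop (nhds 0) := by
  set C : ℝ := ∑ i : Fin n, w i *
      ((∑ j : Fin (K - 1), if (j : ℕ) + 1 < k i then lam j else 0) +
       (∑ j : Fin (K - 1), if (j : ℕ) + 1 < k i then 0 else mu j)) with hC
  have hC0 : 0 ≤ C := by
    apply Finset.sum_nonneg
    intro i _
    apply mul_nonneg (hw i)
    apply add_nonneg <;> apply Finset.sum_nonneg <;> intro j _ <;> split_ifs <;>
      first | exact hlam j | exact hmu j | exact le_refl 0
  have key : ∀ α : ℝ, 0 < α →
      0 ≤ (∑ i : Fin n, w i * csoLoss α (x i) (k i) lam mu β τ) ∧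
      (∑ i : Fin n, w i * csoLoss α (x i) (k i) lam mu β τ) ≤
        (Real.exp (-(α * ε)) / α) * C := by
    intro α hα
    have hE0 : 0 ≤ Real.exp (-(α * ε)) / α := by positivity
    constructor
    · apply Finset.sum_nonneg
      intro i _
      apply mul_nonneg (hw i)
      apply Finset.sum_nonneg
      intro j _
      split_ifs
      · exact mul_nonneg (hlam j) (softplus_nonneg hα _)
      · exact mul_nonneg (hmu j) (softplus_nonneg hα _)
    · rw [hC, Finset.mul_sum]
      apply Finset.sum_le_sum
      intro i _
      rw [← mul_assoc, mul_comm (Real.exp (-(α * ε)) / α) (w i), mul_assoc]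
      apply mul_le_mul_of_nonneg_left _ (hw i)
      unfold csoLoss
      rw [mul_add, Finset.mul_sum, Finset.mul_sum, ← Finset.sum_add_distrib]
      apply Finset.sum_le_sum
      intro j _
      by_cases hj : (j : ℕ) + 1 < k i
      · simp only [hj, if_true]
        have h1 := (hsep i j).1 hj
        have : τ j - ⟪β, x i⟫ ≤ -ε := by linarith
        calc lam j * softplus α (τ j - ⟪β, x i⟫)
            ≤ lam j * (Real.exp (-(α * ε)) / α) :=
              mul_le_mul_of_nonneg_left (softplus_le hα this) (hlam j)
          _ = Real.exp (-(α * ε)) / α * lam j + Real.exp (-(α * ε)) / α * 0 := by ring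
      · simp only [hj, if_false]
        have h2 := (hsep i j).2 (le_of_not_gt hj)
        have : ⟪β, x i⟫ - τ j ≤ -ε := by linarith
        calc mu j * softplus α (⟪β, x i⟫ - τ j)
            ≤ mu j * (Real.exp (-(α * ε)) / α) :=
              mul_le_mul_of_nonneg_left (softplus_le hα this) (hmu j)
          _ = Real.exp (-(α * ε)) / α * 0 + Real.exp (-(α * ε)) / α * mu j := by ring
  refine ⟨key, ?_⟩
  have hg : Tendsto (fun α : ℝ => Real.exp (-(α * ε)) / α * C) atTop (nhds 0) := by
    have h1 : Tendsto (fun α : ℝ => Real.exp (-(α * ε))) atTop (nhds 0) := by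
      apply Real.tendsto_exp_atBot.comp
      apply tendsto_neg_atBot_iff.2
      exact Tendsto.atTop_mul_const hε tendsto_id
    have h2 : Tendsto (fun α : ℝ => α⁻¹) atTop (nhds (0:ℝ)) := tendsto_inv_atTop_zero
    have := (h1.mul h2).mul_const C
    simpa [div_eq_mul_inv] using this
  apply tendsto_of_tendsto_of_tendsto_of_le_of_le' tendsto_const_nhds hg
  · filter_upwards [eventually_gt_atTop (0:ℝ)] with α hα using (key α hα).1
  · filter_upwards [eventually_gt_atTop (0:ℝ)] with α hα using (key α hα).2
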